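/- Let σ, τ > 0 and μ ∈ ℝ. Define r(β) = ∫_ℝ -Δ·Φ((Δ-β)/σ)·φ((Δ-μ)/τ) dΔ. Then the minimum Bayes risk is strictly negative: r(-μσ²/τ²) < 0. (The Bayes-optimal thresholding rule strictly outperforms the never-ship rule, whose Bayes risk is zero.) -/

import Mathlib

set_option maxHeartbeats 1000000


open MeasureTheory Real

/-- The standard normal density. -/
noncomputable def stdNormalPDF (t : ℝ) : ℝ := Real.exp (-t ^ 2 / 2) / Real.sqrt (2 * Real.pi)

/-- The standard normal CDF. -/
noncomputable def stdNormalCDF (t : ℝ) : ℝ := ∫ u in Set.Iic t, stdNormalPDF u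

open Set Filter Topology

lemma pdf_pos (t : ℝ) : 0 < stdNormalPDF t :=
  div_pos (Real.exp_pos _) (Real.sqrt_pos.2 (by positivity))

lemma pdf_cont : Continuous stdNormalPDF := by
  unfold stdNormalPDF
  fun_prop

lemma pdf_eq (t : ℝ) : stdNormalPDF t = Real.exp (-(1/2) * t ^ 2) / Real.sqrt (2 * Real.pi) := by
  unfold stdNormalPDF; ring_nf

lemma pdf_even (t : ℝ) : stdNormalPDF (-t) = stdNormalPDF t := by
  unfold stdNormalPDF; ring_nf

lemma pdf_integrable : Integrable stdNormalPDF := by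
  have h := (integrable_exp_neg_mul_sq (by norm_num : (0:ℝ) < 1/2)).div_const
    (Real.sqrt (2 * Real.pi))
  exact h.congr (Filter.Eventually.of_forall fun x => (pdf_eq x).symm)

lemma id_mul_pdf_integrable : Integrable (fun t : ℝ => t * stdNormalPDF t) := by
  have h := (integrable_mul_exp_neg_mul_sq (by norm_num : (0:ℝ) < 1/2)).div_const
    (Real.sqrt (2 * Real.pi))
  refine h.congr (Filter.Eventually.of_forall fun x => ?_)
  simp only [pdf_eq]; ring

lemma integral_pdf : ∫ t, stdNormalPDF t = 1 := by
  have h : ∫ t : ℝ, Real.exp (-(1/2) * t ^ 2) = Real.sqrt (2 * Real.pi) := by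
    rw [integral_gaussian]
    congr 1
    rw [div_div_eq_mul_div, mul_comm]
    norm_num
  calc ∫ t, stdNormalPDF t = (∫ t : ℝ, Real.exp (-(1/2) * t ^ 2)) / Real.sqrt (2 * Real.pi) := by
        rw [← integral_div]
        exact integral_congr_ae (Filter.Eventually.of_forall fun x => pdf_eq x)
    _ = 1 := by
        rw [h, div_self (ne_of_gt (Real.sqrt_pos.2 (by positivity)))]

lemma cdf_pos (t : ℝ) : 0 < stdNormalCDF t := by
  rw [stdNormalCDF]
  rw [setIntegral_pos_iff_support_of_nonneg_ae
    (Filter.Eventually.of_forall fun x => (pdf_pos x).le) pdf_integrable.integrableOn]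
  have hsupp : Function.support stdNormalPDF = Set.univ := by
    ext x; simp [Function.mem_support, (pdf_pos x).ne']
  rw [hsupp, Set.univ_inter]
  simp [Real.volume_Iic]

lemma cdf_le_one (t : ℝ) : stdNormalCDF t ≤ 1 := by
  rw [stdNormalCDF, ← integral_pdf]
  exact setIntegral_le_integral pdf_integrable
    (Filter.Eventually.of_forall fun x => (pdf_pos x).le)

lemma hasDerivAt_cdf (t : ℝ) : HasDerivAt stdNormalCDF (stdNormalPDF t) t := by
  have heq : ∀ s : ℝ, stdNormalCDF s = stdNormalCDF 0 + ∫ u in (0:ℝ)..s, stdNormalPDF u := by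
    intro s
    have := intervalIntegral.integral_Iic_sub_Iic (μ := volume) (f := stdNormalPDF) (a := (0:ℝ)) (b := s)
      pdf_integrable.integrableOn pdf_integrable.integrableOn
    rw [stdNormalCDF, stdNormalCDF, ← this]
    ring
  have h : HasDerivAt (fun s => stdNormalCDF 0 + ∫ u in (0:ℝ)..s, stdNormalPDF u)
      (stdNormalPDF t) t := by
    refine HasDerivAt.const_add _ ?_
    exact intervalIntegral.integral_hasDerivAt_right pdf_integrable.intervalIntegrable
      (pdf_cont.stronglyMeasurable.stronglyMeasurableAtFilter)
      pdf_cont.continuousAt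
  exact h.congr_of_eventuallyEq (Filter.Eventually.of_forall heq)

lemma cdf_cont : Continuous stdNormalCDF :=
  continuous_iff_continuousAt.2 fun t => (hasDerivAt_cdf t).continuousAt

lemma integral_id_mul_pdf_Iic (x : ℝ) :
    ∫ u in Iic x, u * stdNormalPDF u = -stdNormalPDF x := by
  have hderiv : ∀ u ∈ Iic x, HasDerivAt (fun v => -stdNormalPDF v) (u * stdNormalPDF u) u := by
    intro u _
    have h1 : HasDerivAt (fun v : ℝ => -v ^ 2 / 2) (-u) u := by
      have := (hasDerivAt_pow 2 u).neg.div_const 2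
      refine this.congr_deriv ?_
      simp; ring
    have h2 := (h1.exp).div_const (Real.sqrt (2 * Real.pi))
    have h3 := h2.neg
    refine h3.congr_deriv ?_
    unfold stdNormalPDF
    ring
  have htend : Tendsto (fun v => -stdNormalPDF v) atBot (𝓝 (0:ℝ)) := by
    have hsq : Tendsto (fun v : ℝ => v ^ 2) atBot atTop := by
      have h : Tendsto (fun x : ℝ => x ^ 2) atTop atTop := tendsto_pow_atTop two_ne_zero
      refine (h.comp tendsto_neg_atBot_atTop).congr fun v => ?_
      simp [Function.comp]
    have h2 : Tendsto (fun v : ℝ => -v ^ 2 / 2) atBot atBot := by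
      have h := tendsto_neg_atTop_atBot.comp
        (hsq.atTop_div_const (show (0:ℝ) < 2 by norm_num))
      refine h.congr fun v => ?_
      simp only [Function.comp_apply]
      ring
    have h3 : Tendsto stdNormalPDF atBot (𝓝 (0:ℝ)) := by
      have h4 := (Real.tendsto_exp_atBot.comp h2).div_const (Real.sqrt (2 * Real.pi))
      simp only [zero_div] at h4
      exact h4
    simpa using h3.neg
  have := integral_Iic_of_hasDerivAt_of_tendsto' hderiv
    id_mul_pdf_integrable.integrableOn htend
  rw [this]; ring

/-- Mills-type inequality: φ(x) + x Φ(x) > 0 for all x. -/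
lemma G_pos (x : ℝ) : 0 < stdNormalPDF x + x * stdNormalCDF x := by
  rcases le_or_gt 0 x with hx | hx
  · have := pdf_pos x
    have := cdf_pos x
    nlinarith
  · -- x < 0 : show -pdf x < x * cdf x, i.e. ∫ u pdf < ∫ x pdf over Iic x
    have key : ∫ u in Iic x, u * stdNormalPDF u < ∫ u in Iic x, x * stdNormalPDF u := by
      have hpos : 0 < ∫ u in Iic x, (x - u) * stdNormalPDF u := by
        rw [setIntegral_pos_iff_support_of_nonneg_ae]
        · refine lt_of_lt_of_le ?_ (measure_mono (?_ : Iio x ⊆ (Function.support fun u => (x - u) * stdNormalPDF u) ∩ Iic x))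
          · simp [Real.volume_Iio]
          · intro u hu
            have hux : u < x := hu
            refine ⟨?_, Set.mem_Iic.mpr hux.le⟩
            simp only [Function.mem_support]
            exact ne_of_gt (mul_pos (by linarith) (pdf_pos u))
        · rw [EventuallyLE, ae_restrict_iff' measurableSet_Iic]
          refine Filter.Eventually.of_forall fun u hu => ?_
          exact mul_nonneg (by linarith [hu.out]) (pdf_pos u).le
        · refine Integrable.integrableOn ?_
          have h1 := pdf_integrable.const_mul x
          have h2 := id_mul_pdf_integrable
          exact (h1.sub h2).congr (Filter.Eventually.of_forall fun u => by
            simp only [Pi.sub_apply]; ring)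
      have heq : ∫ u in Iic x, (x - u) * stdNormalPDF u
          = (∫ u in Iic x, x * stdNormalPDF u) - ∫ u in Iic x, u * stdNormalPDF u := by
        rw [← integral_sub ((pdf_integrable.const_mul x).integrableOn)
          id_mul_pdf_integrable.integrableOn]
        exact integral_congr_ae (Filter.Eventually.of_forall fun u => by ring)
      linarith [heq ▸ hpos]
    rw [integral_id_mul_pdf_Iic, integral_const_mul] at key
    rw [stdNormalCDF]
    linarith

/-- The key inequality via monotonicity of `K`. -/
lemma key_ineq (b : ℝ) {a : ℝ} (ha : 0 < a) :
    Real.exp (a * b) * stdNormalCDF (-a - b) < Real.exp (-(a * b)) * stdNormalCDF (a - b) := by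
  set K : ℝ → ℝ := fun s => Real.exp (s ^ 2 / 2 - s * b) * stdNormalCDF (s - b)
      - Real.exp (s ^ 2 / 2 + s * b) * stdNormalCDF (-s - b) with hK
  have hderiv : ∀ s : ℝ, HasDerivAt K
      (Real.exp (s ^ 2 / 2 - s * b) * (stdNormalPDF (s - b) + (s - b) * stdNormalCDF (s - b))
       + Real.exp (s ^ 2 / 2 + s * b) * (stdNormalPDF (-s - b) + (-s - b) * stdNormalCDF (-s - b))) s := by
    intro s
    have e1 : HasDerivAt (fun s : ℝ => s ^ 2 / 2 - s * b) (s - b) s := by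
      have := ((hasDerivAt_pow 2 s).div_const 2).sub ((hasDerivAt_id s).mul_const b)
      refine this.congr_deriv ?_
      simp
    have e2 : HasDerivAt (fun s : ℝ => s ^ 2 / 2 + s * b) (s + b) s := by
      have := ((hasDerivAt_pow 2 s).div_const 2).add ((hasDerivAt_id s).mul_const b)
      refine this.congr_deriv ?_
      simp
    have c1 : HasDerivAt (fun s : ℝ => stdNormalCDF (s - b)) (stdNormalPDF (s - b)) s := by
      have := (hasDerivAt_cdf (s - b)).comp s ((hasDerivAt_id s).sub_const b)
      simpa [Function.comp_def] using this
    have c2 : HasDerivAt (fun s : ℝ => stdNormalCDF (-s - b)) (-stdNormalPDF (-s - b)) s := by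
      have := (hasDerivAt_cdf (-s - b)).comp s (((hasDerivAt_id s).neg).sub_const b)
      simpa [Function.comp_def] using this
    have h1 := (e1.exp).mul c1
    have h2 := (e2.exp).mul c2
    have := h1.sub h2
    refine this.congr_deriv ?_
    ring
  have hpos : ∀ s : ℝ, 0 <
      Real.exp (s ^ 2 / 2 - s * b) * (stdNormalPDF (s - b) + (s - b) * stdNormalCDF (s - b))
      + Real.exp (s ^ 2 / 2 + s * b) * (stdNormalPDF (-s - b) + (-s - b) * stdNormalCDF (-s - b)) := by
    intro s
    have g1 := G_pos (s - b)
    have g2 := G_pos (-s - b)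
    positivity
  have hmono : StrictMono K := strictMono_of_hasDerivAt_pos hderiv hpos
  have h0 : K 0 = 0 := by simp [hK]
  have hKa : 0 < K a := h0 ▸ hmono ha
  have hexp : (0:ℝ) < Real.exp (a ^ 2 / 2) := Real.exp_pos _
  rw [hK] at hKa
  simp only [sub_pos] at hKa
  have e1 : Real.exp (a ^ 2 / 2 - a * b) = Real.exp (a ^ 2 / 2) * Real.exp (-(a * b)) := by
    rw [← Real.exp_add]; ring_nf
  have e2 : Real.exp (a ^ 2 / 2 + a * b) = Real.exp (a ^ 2 / 2) * Real.exp (a * b) := by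
    rw [← Real.exp_add]
  rw [e1, e2, mul_assoc, mul_assoc] at hKa
  exact lt_of_mul_lt_mul_left hKa hexp.le

lemma key_ineq' (b : ℝ) {a : ℝ} (ha : 0 < a) {P : ℝ} (hP : 0 < P) :
    stdNormalCDF (-a - b) * P < stdNormalCDF (a - b) * (Real.exp (-(2 * (a * b))) * P) := by
  have hk := key_ineq b ha
  have e1 : Real.exp (-(2 * (a * b))) = Real.exp (-(a * b)) * Real.exp (-(a * b)) := by
    rw [← Real.exp_add]; ring_nf
  have h2 : stdNormalCDF (-a - b)
      < Real.exp (-(a * b)) * (Real.exp (-(a * b)) * stdNormalCDF (a - b)) := by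
    have hm := mul_lt_mul_of_pos_left hk (Real.exp_pos (-(a * b)))
    calc stdNormalCDF (-a - b)
        = Real.exp (-(a * b)) * (Real.exp (a * b) * stdNormalCDF (-a - b)) := by
          rw [← mul_assoc, ← Real.exp_add]; simp
      _ < _ := hm
  calc stdNormalCDF (-a - b) * P
      < (Real.exp (-(a * b)) * (Real.exp (-(a * b)) * stdNormalCDF (a - b))) * P :=
        mul_lt_mul_of_pos_right h2 hP
    _ = stdNormalCDF (a - b) * (Real.exp (-(2 * (a * b))) * P) := by rw [e1]; ring

/-- The minimum Bayes risk in the Gaussian–Gaussian model is strictly negative: the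
Bayes-optimal thresholding rule strictly outperforms the never-ship rule. -/
theorem bayesRisk_min_neg (σ τ μ : ℝ) (hσ : 0 < σ) (hτ : 0 < τ)
    (r : ℝ → ℝ)
    (hr : ∀ β, r β = ∫ Δ : ℝ, -Δ * stdNormalCDF ((Δ - β) / σ) * stdNormalPDF ((Δ - μ) / τ)) :
    r (-μ * σ ^ 2 / τ ^ 2) < 0 := by
  set β : ℝ := -μ * σ ^ 2 / τ ^ 2 with hβ
  set A : ℝ → ℝ := fun x => stdNormalCDF ((x - β) / σ) * stdNormalPDF ((x - μ) / τ) with hA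
  set g : ℝ → ℝ := fun x => x * A x with hg
  have hAcont : Continuous A := by
    refine Continuous.mul ?_ ?_
    · exact cdf_cont.comp (by fun_prop)
    · exact pdf_cont.comp (by fun_prop)
  have hgcont : Continuous g := continuous_id.mul hAcont
  -- integrability of the majorant
  have hmaj : Integrable (fun x : ℝ => x * stdNormalPDF ((x - μ) / τ)) := by
    have hF : Integrable (fun y : ℝ => (τ * y + μ) * stdNormalPDF y) := by
      have h1 := id_mul_pdf_integrable.const_mul τ
      have h2 := pdf_integrable.const_mul μ
      exact (h1.add h2).congr (Filter.Eventually.of_forall fun y => by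
        simp only [Pi.add_apply]; ring)
    have hG : Integrable (fun x : ℝ => (τ * (x / τ) + μ) * stdNormalPDF (x / τ)) :=
      hF.comp_div (ne_of_gt hτ)
    have hH := hG.comp_sub_right μ
    refine hH.congr (Filter.Eventually.of_forall fun x => ?_)
    have hxx : τ * ((x - μ) / τ) + μ = x := by field_simp; ring
    simp only [hxx]
  have hgInt : Integrable g := by
    refine hmaj.mono hgcont.aestronglyMeasurable (Filter.Eventually.of_forall fun x => ?_)
    have h1 := cdf_pos ((x - β) / σ)
    have h2 := cdf_le_one ((x - β) / σ)
    have h3 := pdf_pos ((x - μ) / τ)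
    simp only [hg, hA, Real.norm_eq_abs, abs_mul]
    refine mul_le_mul_of_nonneg_left ?_ (abs_nonneg x)
    rw [abs_of_pos h1, abs_of_pos h3]
    nlinarith
  have hgnegInt : Integrable (fun x => g (-x)) := hgInt.comp_neg
  -- the key pointwise inequality
  have hkey : ∀ x : ℝ, 0 < x → A (-x) < A x := by
    intro x hx
    have harg1 : x / σ - β / σ = (x - β) / σ := by ring
    have harg2 : -(x / σ) - β / σ = (-x - β) / σ := by ring
    have hpdfe : stdNormalPDF ((-x - μ) / τ) = stdNormalPDF ((x + μ) / τ) := by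
      rw [show (-x - μ) / τ = -((x + μ) / τ) by ring, pdf_even]
    have hpdf : stdNormalPDF ((x - μ) / τ)
        = Real.exp (-(2 * (x / σ * (β / σ)))) * stdNormalPDF ((x + μ) / τ) := by
      unfold stdNormalPDF
      rw [← mul_div_assoc, ← Real.exp_add]
      congr 1
      rw [hβ]
      field_simp
      ring
    have hk := key_ineq' (β / σ) (div_pos hx hσ) (pdf_pos ((x + μ) / τ))
    rw [harg1, harg2] at hk
    calc A (-x) = stdNormalCDF ((-x - β) / σ) * stdNormalPDF ((x + μ) / τ) := by
          rw [hA]; simp only []; rw [hpdfe]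
      _ < stdNormalCDF ((x - β) / σ)
          * (Real.exp (-(2 * (x / σ * (β / σ)))) * stdNormalPDF ((x + μ) / τ)) := hk
      _ = A x := by rw [hA]; simp only []; rw [hpdf]
  -- positivity of the symmetrized integrand
  have hsum_pos : ∀ x : ℝ, x ≠ 0 → 0 < g x + g (-x) := by
    have hcase : ∀ y : ℝ, 0 < y → 0 < g y + g (-y) := by
      intro y hy
      have heq : g y + g (-y) = y * (A y - A (-y)) := by simp only [hg]; ring
      rw [heq]
      exact mul_pos hy (sub_pos.2 (hkey y hy))
    intro x hx0
    rcases lt_or_gt_of_ne hx0 with h | h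
    · have h2 := hcase (-x) (by linarith)
      rw [neg_neg] at h2
      linarith
    · exact hcase x h
  have hsum_nonneg : ∀ x : ℝ, 0 ≤ g x + g (-x) := by
    intro x
    rcases eq_or_ne x 0 with rfl | hx
    · simp [hg]
    · exact (hsum_pos x hx).le
  have hint_sum : Integrable (fun x => g x + g (-x)) := hgInt.add hgnegInt
  have hpos : 0 < ∫ x, (g x + g (-x)) := by
    rw [integral_pos_iff_support_of_nonneg_ae (Filter.Eventually.of_forall hsum_nonneg) hint_sum]
    refine lt_of_lt_of_le ?_ (measure_mono (fun x (hx : x ∈ Ioi (0:ℝ)) => ?_))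
    · show (0:ENNReal) < volume (Ioi (0:ℝ))
      simp [Real.volume_Ioi]
    · exact (hsum_pos x (ne_of_gt hx)).ne'
  have hsplit : ∫ x, (g x + g (-x)) = (∫ x, g x) + ∫ x, g (-x) := integral_add hgInt hgnegInt
  have hneg : ∫ x, g (-x) = ∫ x, g x := integral_neg_eq_self g volume
  have hgpos : 0 < ∫ x, g x := by
    rw [hsplit, hneg] at hpos
    linarith
  rw [hr β]
  have hfun : (fun Δ : ℝ => -Δ * stdNormalCDF ((Δ - β) / σ) * stdNormalPDF ((Δ - μ) / τ))
      = fun Δ => -(g Δ) := by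
    funext Δ
    simp only [hg, hA]
    ring
  rw [hfun, integral_neg]
  linarith
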